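/- arXiv:q-alg/9604005 — 4 statements merged into one kernel-verified Lean document; each statement's English description precedes it below -/
import Mathlib

section
/- Let N ≥ 2, let σ be a permutation of {1,…,N} which is a cycle whose support is all of {1,…,N} (an N-cycle), and fix an index i_0. Then the matrix A, indexed by the indices different from i_0 and defined by A_{ij} = 1 if σ(j) = i and A_{ij} = 0 otherwise (entries in ℂ), is nilpotent. -/
/-!
Deleting row and column `i₀` from the permutation matrix of `σ` leaves the matrix of the partial
map `e_j ↦ e_{σ j}`, killed as soon as the path of `j` reaches `i₀`. So a nonzero entry of its
`k`-th power records a path `j, σ j, …, σᵏ j` avoiding `i₀`; since `σ` is an `N`-cycle, every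
`j` reaches `i₀` within `N` steps, hence the `N`-th power vanishes.
-/

open Matrix

variable {α : Type*} (R : Type*) [DecidableEq α] [Semiring R] (p : α → Prop) [Fintype {x // p x}]

def compressedFunMatrix (f : α → α) : Matrix {x // p x} {x // p x} R :=
  of fun i j => if f j = i then 1 else 0

variable {R p}

theorem iterate_of_compressedFunMatrix_pow_apply_ne_zero {f : α → α} {k : ℕ}
    {i j : {x // p x}} (h : (compressedFunMatrix R p f ^ k) i j ≠ 0) :
    ∀ m ≤ k, p (f^[m] j) := by
  induction k generalizing i j with
  | zero =>
    intro m hm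
    simpa [Nat.le_zero.mp hm] using j.2
  | succ k ih =>
    rw [pow_succ, mul_apply] at h
    obtain ⟨l, -, hl⟩ := Finset.exists_ne_zero_of_sum_ne_zero h
    have hfj : f j = l := by
      by_contra hne
      simp [compressedFunMatrix, hne] at hl
    have hpath := ih (left_ne_zero_of_mul hl)
    rintro (_ | m) hm
    · exact j.2
    · simpa [Function.iterate_succ_apply, hfj] using hpath m (by omega)

theorem compressedFunMatrix_pow_eq_zero {f : α → α} {n : ℕ}
    (h : ∀ x, p x → ∃ m ≤ n, ¬ p (f^[m] x)) :
    compressedFunMatrix R p f ^ n = 0 := by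
  ext i j
  by_contra hij
  obtain ⟨m, hm, hleave⟩ := h j j.2
  exact hleave (iterate_of_compressedFunMatrix_pow_apply_ne_zero hij m hm)

theorem Equiv.Perm.IsCycle.exists_pow_eq_of_support_eq_univ [Fintype α] {σ : Equiv.Perm α}
    (hσ : σ.IsCycle) (hsupp : σ.support = Finset.univ) (x y : α) :
    ∃ m < Fintype.card α, (σ ^ m) x = y := by
  have hmem : ∀ z, σ z ≠ z := fun z => Equiv.Perm.mem_support.mp (hsupp ▸ Finset.mem_univ z)
  rw [← Finset.card_univ, ← hsupp, ← hσ.orderOf]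
  exact (hσ.sameCycle (hmem x) (hmem y)).exists_pow_eq'

theorem stmt_4_general (N : ℕ) (σ : Equiv.Perm (Fin N))
    (hcycle : σ.IsCycle) (hsupp : σ.support = Finset.univ) (i0 : Fin N) :
    IsNilpotent
      (Matrix.of fun i j : {i : Fin N // i ≠ i0} =>
        if σ j.val = i.val then (1 : ℂ) else 0) := by
  refine ⟨N, compressedFunMatrix_pow_eq_zero fun j _ => ?_⟩
  obtain ⟨m, hm, hreach⟩ := hcycle.exists_pow_eq_of_support_eq_univ hsupp j i0
  refine ⟨m, by simpa using hm.le, not_not.mpr ?_⟩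
  rwa [Equiv.Perm.iterate_eq_pow]

/-- If `σ` is an `N`-cycle on `{1,…,N}` (`N ≥ 2`), then the compression of its permutation
matrix obtained by deleting the row and column of an index `i0` is nilpotent. -/
theorem stmt_4 (N : ℕ) (hN : 2 ≤ N) (σ : Equiv.Perm (Fin N))
    (hcycle : σ.IsCycle) (hsupp : σ.support = Finset.univ) (i0 : Fin N) :
    IsNilpotent
      (Matrix.of fun i j : {i : Fin N // i ≠ i0} =>
        if σ j.val = i.val then (1 : ℂ) else 0) :=
  stmt_4_general N σ hcycle hsupp i0
end

section
/- There exists a family of polynomials T̃_j ∈ ℚ[X], for j ≥ 1, with deg T̃_j ≤ 2j, such that for every natural number n the polynomial Q_n(h) := ∏_{l=1}^{n} ((1+h)^l − 1) ∈ ℚ[h] satisfies: the coefficient of h^k in Q_n vanishes for k < n, the coefficient of h^n equals n!, and for every j ≥ 1 the coefficient of h^{n+j} equals n! · T̃_j(n). Equivalently, ∏_{l=1}^{n} ((1+h)^l − 1)/h = n!·(1 + ∑_{j≥1} h^j T̃_j(n)). -/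
/-!
Write `∏_{l ≤ n} ((1+h)^l - 1) = h^n ∏_{l ≤ n} P_l` with `P_l = ((1+h)^l - 1)/h`, and let `a_j(n)`
be the coefficient of `h^j` in `∏_{l ≤ n} P_l` divided by `n!`. The coefficient of `h^i` in
`P_{n+1}` is `C(n+1, i+1) = (n+1) C(n, i)/(i+1)`, so multiplying by `P_{n+1}` gives
`a_j(n+1) - a_j(n) = ∑_{k<j} a_k(n) C(n, j-k)/(j-k+1)`. By strong induction on `j` the right-hand
side is a polynomial in `n` of degree `≤ 2j - 1`, and a sequence whose forward difference is a
polynomial of degree `d` is itself a polynomial of degree `≤ d + 1` (an antidifference is built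
from Bernoulli polynomials). Hence `a_j` is a polynomial of degree `≤ 2j`.
-/

open Polynomial Finset fwdDiff

namespace Polynomial

theorem natDegree_bernoulli_le (n : ℕ) : (bernoulli n).natDegree ≤ n :=
  natDegree_le_iff_coeff_eq_zero.mpr fun i hi => by
    rw [coeff_bernoulli, if_neg (by exact_mod_cast hi.not_ge)]

theorem exists_eval_add_one_sub_eval_eq (q : ℚ[X]) :
    ∃ S : ℚ[X], S.natDegree ≤ q.natDegree + 1 ∧ ∀ x, S.eval (x + 1) - S.eval x = q.eval x := by
  -- `B_{m+1}(x + 1) - B_{m+1}(x) = (m + 1) x ^ m`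
  refine ⟨∑ m ∈ range (q.natDegree + 1), C (q.coeff m / (m + 1)) * bernoulli (m + 1),
    natDegree_sum_le_of_forall_le _ _ fun m hm => ?_, fun x => ?_⟩
  · refine (natDegree_C_mul_le _ _).trans ((natDegree_bernoulli_le _).trans ?_)
    have := mem_range.mp hm
    omega
  · rw [q.eval_eq_sum_range, eval_finsetSum, eval_finsetSum, ← sum_sub_distrib]
    refine sum_congr rfl fun m _ => ?_
    simp only [eval_mul, eval_C]
    rw [add_comm x, bernoulli_eval_one_add]
    field_simp
    push_cast
    ring

theorem coeff_divX_one_add_X_pow {R : Type*} [Semiring R] (l i : ℕ) :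
    ((1 + X : R[X]) ^ l).divX.coeff i = (l.choose (i + 1) : R) := by
  rw [coeff_divX, coeff_one_add_X_pow]

theorem one_add_X_pow_sub_one {R : Type*} [CommRing R] (l : ℕ) :
    (1 + X : R[X]) ^ l - 1 = X * ((1 + X) ^ l).divX := by
  conv_lhs => rw [← X_mul_divX_add ((1 + X) ^ l)]
  simp [coeff_one_add_X_pow]

end Polynomial

def IsPolynomialOfDegreeLE (f : ℕ → ℚ) (d : ℕ) : Prop :=
  ∃ p : ℚ[X], p.natDegree ≤ d ∧ ∀ n : ℕ, f n = p.eval (n : ℚ)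

namespace IsPolynomialOfDegreeLE

theorem const (c : ℚ) : IsPolynomialOfDegreeLE (fun _ => c) 0 :=
  ⟨C c, by simp, fun _ => by simp⟩

theorem mono {f : ℕ → ℚ} {d e : ℕ} (hf : IsPolynomialOfDegreeLE f d) (hde : d ≤ e) :
    IsPolynomialOfDegreeLE f e :=
  let ⟨p, hp, hfp⟩ := hf
  ⟨p, hp.trans hde, hfp⟩

theorem mul {f g : ℕ → ℚ} {d e : ℕ} (hf : IsPolynomialOfDegreeLE f d)
    (hg : IsPolynomialOfDegreeLE g e) : IsPolynomialOfDegreeLE (fun n => f n * g n) (d + e) :=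
  let ⟨p, hp, hfp⟩ := hf
  let ⟨q, hq, hgq⟩ := hg
  ⟨p * q, natDegree_mul_le.trans (add_le_add hp hq), fun n => by simp only [eval_mul, hfp, hgq]⟩

theorem sum {ι : Type*} {s : Finset ι} {f : ι → ℕ → ℚ} {d : ℕ}
    (hf : ∀ i ∈ s, IsPolynomialOfDegreeLE (f i) d) :
    IsPolynomialOfDegreeLE (fun n => ∑ i ∈ s, f i n) d := by
  choose! p hp hfp using hf
  exact ⟨∑ i ∈ s, p i, natDegree_sum_le_of_forall_le _ _ hp, fun n => by
    rw [eval_finsetSum]; exact sum_congr rfl fun i hi => hfp i hi n⟩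

theorem of_fwdDiff {f : ℕ → ℚ} {d : ℕ} (hf : IsPolynomialOfDegreeLE (Δ_[1] f) d) :
    IsPolynomialOfDegreeLE f (d + 1) := by
  obtain ⟨q, hq, hfq⟩ := hf
  obtain ⟨S, hS, hSq⟩ := exists_eval_add_one_sub_eval_eq q
  refine ⟨S + C (f 0 - S.eval 0), (natDegree_add_C).le.trans (by omega), fun n => ?_⟩
  induction n with
  | zero => simp
  | succ n ih =>
    have hstep : f (n + 1) = f n + q.eval (n : ℚ) := by
      rw [← hfq, fwdDiff]; ring
    rw [hstep, ih, ← hSq, Nat.cast_succ]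
    simp only [eval_add, eval_C]
    ring

end IsPolynomialOfDegreeLE

theorem isPolynomialOfDegreeLE_choose (i : ℕ) :
    IsPolynomialOfDegreeLE (fun n => (n.choose i : ℚ)) i :=
  ⟨C (i.factorial : ℚ)⁻¹ * descPochhammer ℚ i,
    (natDegree_C_mul_le _ _).trans (descPochhammer_natDegree ℚ i).le, fun n => by
      rw [eval_mul, eval_C, ← div_eq_inv_mul, ← Nat.cast_choose_eq_descPochhammer_div]⟩

section ProdDivX

variable (R : Type*)

noncomputable def prodDivX [CommSemiring R] (n : ℕ) : R[X] :=
  ∏ l ∈ Icc 1 n, ((1 + X) ^ l).divX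

theorem prod_one_add_X_pow_sub_one [CommRing R] (n : ℕ) :
    ∏ l ∈ Icc 1 n, ((1 + X : R[X]) ^ l - 1) = X ^ n * prodDivX R n := by
  simp only [one_add_X_pow_sub_one, prod_mul_distrib, prod_const, Nat.card_Icc,
    Nat.add_sub_cancel, prodDivX]

theorem coeff_prodDivX_succ [CommSemiring R] (n j : ℕ) :
    (prodDivX R (n + 1)).coeff j =
      ∑ k ∈ range (j + 1), (prodDivX R n).coeff k * ((n + 1).choose (j - k + 1) : R) := by
  rw [prodDivX, prod_Icc_succ_top (by omega), ← prodDivX, coeff_mul]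
  simp only [coeff_divX_one_add_X_pow]
  exact Nat.sum_antidiagonal_eq_sum_range_succ
    (fun k i => (prodDivX R n).coeff k * ((n + 1).choose (i + 1) : R)) j

end ProdDivX

/-- The paper's `T̃_j(n)`. -/
noncomputable def scaledCoeff (j n : ℕ) : ℚ := (prodDivX ℚ n).coeff j / n.factorial

theorem coeff_zero_prodDivX (n : ℕ) : (prodDivX ℚ n).coeff 0 = n.factorial := by
  induction n with
  | zero => simp [prodDivX]
  | succ n ih => simp [coeff_prodDivX_succ, ih, Nat.factorial_succ, mul_comm]

theorem scaledCoeff_zero (n : ℕ) : scaledCoeff 0 n = 1 := by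
  simp [scaledCoeff, coeff_zero_prodDivX, Nat.factorial_ne_zero]

theorem scaledCoeff_succ (j n : ℕ) :
    scaledCoeff j (n + 1) =
      ∑ k ∈ range (j + 1), scaledCoeff k n * ((n.choose (j - k) : ℚ) / (j - k + 1 : ℕ)) := by
  rw [scaledCoeff, coeff_prodDivX_succ, sum_div]
  refine sum_congr rfl fun k _ => ?_
  have hchoose := congrArg (Nat.cast : ℕ → ℚ) (Nat.add_one_mul_choose_eq n (j - k))
  push_cast at hchoose ⊢
  rw [scaledCoeff, Nat.factorial_succ]
  field_simp
  push_cast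
  linear_combination (-(prodDivX ℚ n).coeff k * n.factorial) * hchoose

theorem fwdDiff_scaledCoeff (j n : ℕ) :
    Δ_[1] (scaledCoeff j) n =
      ∑ k ∈ range j, scaledCoeff k n * ((n.choose (j - k) : ℚ) / (j - k + 1 : ℕ)) := by
  rw [fwdDiff, scaledCoeff_succ, sum_range_succ]
  simp

theorem isPolynomialOfDegreeLE_scaledCoeff (j : ℕ) :
    IsPolynomialOfDegreeLE (scaledCoeff j) (2 * j) := by
  induction j using Nat.strong_induction_on with
  | _ j ih =>
    rcases j with _ | j
    · simpa [funext scaledCoeff_zero] using IsPolynomialOfDegreeLE.const 1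
    refine IsPolynomialOfDegreeLE.of_fwdDiff (d := 2 * j + 1) ?_
    rw [funext (fwdDiff_scaledCoeff (j + 1))]
    refine IsPolynomialOfDegreeLE.sum fun k hk => ?_
    have hk := mem_range.mp hk
    exact ((ih k hk).mul ((isPolynomialOfDegreeLE_choose (j + 1 - k)).mul
      (IsPolynomialOfDegreeLE.const _))).mono (by omega)

open Polynomial in
/-- Lemma A.1 (single-product form): there are polynomials `T̃_j ∈ ℚ[X]` (`j ≥ 1`) of degree
at most `2j` such that `∏_{l=1}^{n} ((1+h)^l - 1) = h^n · n! · (1 + ∑_{j≥1} h^j T̃_j(n))`,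
i.e. the coefficient of `h^k` vanishes for `k < n`, equals `n!` for `k = n`, and equals
`n! · T̃_j(n)` for `k = n + j`, `j ≥ 1`. -/
theorem stmt_6 :
    ∃ T : ℕ → Polynomial ℚ,
      (∀ j : ℕ, 1 ≤ j → (T j).natDegree ≤ 2 * j) ∧
      ∀ n : ℕ,
        let Q : Polynomial ℚ := ∏ l ∈ Finset.Icc 1 n, ((1 + Polynomial.X) ^ l - 1)
        (∀ k : ℕ, k < n → Q.coeff k = 0) ∧
        Q.coeff n = (n.factorial : ℚ) ∧
        ∀ j : ℕ, 1 ≤ j → Q.coeff (n + j) = (n.factorial : ℚ) * (T j).eval (n : ℚ) := by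
  choose T hTdeg hT using isPolynomialOfDegreeLE_scaledCoeff
  have hcoeff (n j : ℕ) : (prodDivX ℚ n).coeff j = n.factorial * scaledCoeff j n := by
    rw [scaledCoeff, mul_div_cancel₀ _ (by exact_mod_cast n.factorial_ne_zero)]
  refine ⟨T, fun j _ => hTdeg j, fun n => ⟨fun k hk => ?_, ?_, fun j _ => ?_⟩⟩
  · rw [prod_one_add_X_pow_sub_one, coeff_X_pow_mul', if_neg (by omega)]
  · rw [prod_one_add_X_pow_sub_one, coeff_X_pow_mul', if_pos le_rfl, Nat.sub_self,
      coeff_zero_prodDivX]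
  · rw [prod_one_add_X_pow_sub_one, coeff_X_pow_mul', if_pos (by omega), Nat.add_sub_cancel_left,
      hcoeff, hT]
end

section
/- There exists a family of polynomials T_j ∈ ℚ[X, Y], for j ≥ 1, with total degree deg T_j ≤ 2j, such that for all natural numbers m, n with n ≤ m the following identity holds in the ring of formal power series ℚ[[h]]: ∏_{l=m−n+1}^{m} ((1+h)^l − 1) = (∏_{l=1}^{n} ((1+h)^l − 1)) · G_{m,n}, where G_{m,n} ∈ ℚ[[h]] is the power series whose coefficient of h^0 is binom(m, n) and whose coefficient of h^j for j ≥ 1 is binom(m, n) · T_j(m, n). -/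
/-!
Put `q = 1 + X`. Every factor is `q ^ (x + 1) - 1 = (x + 1) · X · E x`, where `E x` has constant
coefficient `1` and `X ^ i`-coefficient `x.choose i / (i + 1)`, a polynomial of degree `i` in `x`.
Writing `m = a + n`, the two products therefore differ by the factor `(a + n).choose n` times
`G a n = ∏_{k < n} E (a + k) / E k`. The `X ^ i`-coefficient of each ratio `E (a + k) / E k` is a
polynomial of degree `≤ i` in `(a, k)`. Passing from `G a k` to `G a (k + 1)` changes the
`X ^ j`-coefficient by a sum of products of lower coefficients, of degree `≤ 2 j - 1`; summing these
increments over `k < n` (Faulhaber) gives a polynomial of degree `≤ 2 j` in `(a, n)`. Substituting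
`a = m - n` is linear and does not raise the degree.
-/

open Finset

namespace MvPolynomial

theorem totalDegree_bind₁_le {σ τ R : Type*} [CommSemiring R] {g : σ → MvPolynomial τ R} {k : ℕ}
    (hg : ∀ i, (g i).totalDegree ≤ k) (p : MvPolynomial σ R) :
    (bind₁ g p).totalDegree ≤ k * p.totalDegree := by
  rw [bind₁, aeval_def, algebraMap_eq, eval₂_eq]
  refine totalDegree_finsetSum_le fun s hs => ?_
  refine (totalDegree_mul _ _).trans ?_
  rw [totalDegree_C, zero_add]
  refine (totalDegree_finsetProd _ _).trans ?_
  calc ∑ i ∈ s.support, (g i ^ s i).totalDegree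
      ≤ ∑ i ∈ s.support, k * s i :=
        sum_le_sum fun i _ =>
          (totalDegree_pow _ _).trans (by rw [mul_comm]; exact Nat.mul_le_mul_right _ (hg i))
    _ ≤ k * p.totalDegree := by rw [← mul_sum]; exact Nat.mul_le_mul_left k (le_totalDegree hs)

end MvPolynomial

def IsPolyFn (d : ℕ) (f : ℕ → ℕ → ℚ) : Prop :=
  ∃ p : MvPolynomial (Fin 2) ℚ,
    p.totalDegree ≤ d ∧ ∀ a b, f a b = MvPolynomial.eval ![(a : ℚ), b] p

namespace IsPolyFn

open MvPolynomial

variable {d e : ℕ} {f g : ℕ → ℕ → ℚ}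

theorem mono (hf : IsPolyFn d f) (hde : d ≤ e) : IsPolyFn e f :=
  let ⟨p, hp, hfp⟩ := hf
  ⟨p, hp.trans hde, hfp⟩

theorem const (c : ℚ) : IsPolyFn 0 fun _ _ => c :=
  ⟨C c, (totalDegree_C c).le, fun _ _ => (eval_C c).symm⟩

theorem fst : IsPolyFn 1 fun a _ => (a : ℚ) :=
  ⟨X 0, (totalDegree_X 0).le, fun _ _ => by simp⟩

theorem snd : IsPolyFn 1 fun _ b => (b : ℚ) :=
  ⟨X 1, (totalDegree_X 1).le, fun _ _ => by simp⟩

theorem add (hf : IsPolyFn d f) (hg : IsPolyFn d g) : IsPolyFn d fun a b => f a b + g a b :=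
  let ⟨p, hp, hfp⟩ := hf
  let ⟨q, hq, hgq⟩ := hg
  ⟨p + q, (totalDegree_add p q).trans (max_le hp hq), fun a b => by simp [hfp, hgq]⟩

theorem mul (hf : IsPolyFn d f) (hg : IsPolyFn e g) : IsPolyFn (d + e) fun a b => f a b * g a b :=
  let ⟨p, hp, hfp⟩ := hf
  let ⟨q, hq, hgq⟩ := hg
  ⟨p * q, (totalDegree_mul p q).trans (add_le_add hp hq), fun a b => by simp [hfp, hgq]⟩

theorem pow (hf : IsPolyFn d f) (n : ℕ) : IsPolyFn (n * d) fun a b => f a b ^ n :=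
  let ⟨p, hp, hfp⟩ := hf
  ⟨p ^ n, (totalDegree_pow p n).trans (Nat.mul_le_mul_left n hp), fun a b => by simp [hfp]⟩

theorem sum {ι : Type*} (s : Finset ι) {f : ι → ℕ → ℕ → ℚ} (hf : ∀ i ∈ s, IsPolyFn d (f i)) :
    IsPolyFn d fun a b => ∑ i ∈ s, f i a b := by
  classical
  induction s using Finset.induction_on with
  | empty => exact ⟨0, by simp, fun _ _ => by simp⟩
  | insert i s hi ih =>
    simp only [sum_insert hi]
    exact (hf i (mem_insert_self i s)).add (ih fun j hj => hf j (mem_insert_of_mem hj))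

theorem polynomial_eval (hf : IsPolyFn d f) (q : Polynomial ℚ) :
    IsPolyFn (q.natDegree * d) fun a b => q.eval (f a b) := by
  simp only [Polynomial.eval_eq_sum_range]
  refine sum _ fun i hi => ((const _).mul (hf.pow i)).mono ?_
  rw [zero_add]
  exact Nat.mul_le_mul_right d (Nat.lt_succ_iff.mp (mem_range.mp hi))

theorem sum_range_pow (e : ℕ) : IsPolyFn (e + 1) fun _ n => ∑ k ∈ range n, (k : ℚ) ^ e := by
  simp only [_root_.sum_range_pow]
  refine sum _ fun i _ => ?_
  simp only [mul_div_right_comm _ ((_ : ℚ) ^ _)]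
  refine (const _).mul (snd.pow _) |>.mono ?_
  omega

theorem sum_range (hf : IsPolyFn d f) : IsPolyFn (d + 1) fun a n => ∑ k ∈ range n, f a k := by
  obtain ⟨p, hp, hfp⟩ := hf
  have expand : ∀ a n, ∑ k ∈ range n, f a k =
      ∑ s ∈ p.support, coeff s p * (a : ℚ) ^ s 0 * ∑ k ∈ range n, (k : ℚ) ^ s 1 := by
    intro a n
    simp only [hfp, eval_eq', Fin.prod_univ_two, mul_sum]
    rw [sum_comm]
    simp [mul_assoc]
  simp only [expand]
  refine sum _ fun s hs => ((const _).mul (fst.pow _)).mul (sum_range_pow _) |>.mono ?_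
  have := le_totalDegree hs
  rw [Finsupp.sum_fintype _ _ (fun _ => rfl), Fin.sum_univ_two] at this
  omega

theorem exists_shear (hf : IsPolyFn d f) :
    ∃ q : MvPolynomial (Fin 2) ℚ, q.totalDegree ≤ d ∧
      ∀ a b, f a b = eval ![((a + b : ℕ) : ℚ), b] q := by
  obtain ⟨p, hp, hfp⟩ := hf
  have hshear : ∀ i, (![X 0 - X 1, X 1] i : MvPolynomial (Fin 2) ℚ).totalDegree ≤ 1 := by
    intro i
    fin_cases i
    · exact (totalDegree_sub _ _).trans (by simp)
    · simp
  refine ⟨bind₁ ![X 0 - X 1, X 1] p, (totalDegree_bind₁_le hshear p).trans (by simpa using hp),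
    fun a b => ?_⟩
  rw [hfp, eval, eval, eval₂Hom_bind₁]
  congr 2
  funext i
  fin_cases i <;> simp

end IsPolyFn

open PowerSeries in
def HasPolyCoeffs (r : ℕ) (F : ℕ → ℕ → PowerSeries ℚ) : Prop :=
  ∀ j, IsPolyFn (r * j) fun a b => coeff j (F a b)

namespace HasPolyCoeffs

open PowerSeries

variable {r : ℕ} {F G : ℕ → ℕ → PowerSeries ℚ}

theorem mul (hF : HasPolyCoeffs r F) (hG : HasPolyCoeffs r G) :
    HasPolyCoeffs r fun a b => F a b * G a b := by
  intro j
  simp only [coeff_mul]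
  refine IsPolyFn.sum _ fun p hp => (hF p.1).mul (hG p.2) |>.mono ?_
  rw [← mul_add, mem_antidiagonal.mp hp]

theorem inv (hF : HasPolyCoeffs r F) (hF1 : ∀ a b, constantCoeff (F a b) = 1) :
    HasPolyCoeffs r fun a b => (F a b)⁻¹ := by
  intro j
  induction j using Nat.strong_induction_on with
  | _ j ih =>
  rcases eq_or_ne j 0 with rfl | hj
  · simpa [hF1] using IsPolyFn.const 1
  have hrec : ∀ a b, coeff j (F a b)⁻¹ = -1 * ∑ p ∈ antidiagonal j,
      if p.2 < j then coeff p.1 (F a b) * coeff p.2 (F a b)⁻¹ else 0 := fun a b => by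
    rw [coeff_inv, if_neg hj, hF1, inv_one]
  simp only [hrec]
  refine (IsPolyFn.const (-1)).mul (IsPolyFn.sum _ fun p hp => ?_) |>.mono (zero_add _).le
  split_ifs with hp2
  · refine (hF p.1).mul (ih p.2 hp2) |>.mono ?_
    rw [← mul_add, mem_antidiagonal.mp hp]
  · exact (IsPolyFn.const 0).mono (Nat.zero_le _)

theorem prod_range (hF : HasPolyCoeffs r F) (hF1 : ∀ a b, constantCoeff (F a b) = 1) :
    HasPolyCoeffs (r + 1) fun a n => ∏ k ∈ range n, F a k := by
  intro j
  induction j using Nat.strong_induction_on with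
  | _ j ih =>
  rcases eq_or_ne j 0 with rfl | hj
  · simpa [hF1] using IsPolyFn.const 1
  have hstep : ∀ a k, coeff j (∏ i ∈ range (k + 1), F a i) - coeff j (∏ i ∈ range k, F a i) =
      ∑ p ∈ antidiagonal j, coeff p.1 (∏ i ∈ range k, F a i) * coeff p.2 (F a k - 1) := by
    intro a k
    rw [prod_range_succ, ← coeff_mul, mul_sub, mul_one, map_sub]
  have htelescope : ∀ a n, coeff j (∏ k ∈ range n, F a k) =
      ∑ k ∈ range n, ∑ p ∈ antidiagonal j,
        coeff p.1 (∏ i ∈ range k, F a i) * coeff p.2 (F a k - 1) := by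
    intro a n
    simp only [← hstep]
    rw [sum_range_sub (fun k => coeff j (∏ i ∈ range k, F a i)), prod_range_zero, coeff_one,
      if_neg hj, sub_zero]
  have hterm : IsPolyFn ((r + 1) * j - 1) fun a k =>
      ∑ p ∈ antidiagonal j, coeff p.1 (∏ i ∈ range k, F a i) * coeff p.2 (F a k - 1) := by
    refine IsPolyFn.sum _ fun p hp => ?_
    have hpj := mem_antidiagonal.mp hp
    rcases eq_or_ne p.2 0 with hp2 | hp2
    · simpa [hp2, hF1] using (IsPolyFn.const 0).mono (Nat.zero_le _)
    simp only [map_sub, coeff_one, if_neg hp2, sub_zero]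
    refine (ih p.1 (by omega)).mul (hF p.2) |>.mono ?_
    have : (r + 1) * j = (r + 1) * p.1 + r * p.2 + p.2 := by rw [← hpj]; ring
    omega
  simp only [htelescope]
  have : j ≤ (r + 1) * j := Nat.le_mul_of_pos_left j r.succ_pos
  exact hterm.sum_range.mono (by omega)

end HasPolyCoeffs

namespace PowerSeries

-- `[x + 1]_q / (x + 1)` at `q = 1 + X`, where `[x + 1]_q = (q ^ (x + 1) - 1) / (q - 1)` is the
-- `q`-integer; this is the series `E x` of the header.
def normalizedQInt (x : ℕ) : PowerSeries ℚ :=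
  mk fun i => (x.choose i : ℚ) / (i + 1)

theorem coeff_one_add_X_pow (n i : ℕ) : coeff i ((1 + X : PowerSeries ℚ) ^ n) = n.choose i := by
  have : (1 + X : PowerSeries ℚ) ^ n = ((1 + Polynomial.X) ^ n : Polynomial ℚ) := by simp
  rw [this, Polynomial.coeff_coe, Polynomial.coeff_one_add_X_pow]

theorem one_add_X_pow_succ_sub_one (x : ℕ) :
    (1 + X : PowerSeries ℚ) ^ (x + 1) - 1 = C ((x : ℚ) + 1) * (X * normalizedQInt x) := by
  ext i
  rw [map_sub, coeff_one_add_X_pow, coeff_C_mul, coeff_one]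
  rcases i with _ | i
  · simp
  · rw [coeff_succ_X_mul, normalizedQInt, coeff_mk, if_neg i.succ_ne_zero, sub_zero]
    have := Nat.add_one_mul_choose_eq x i
    field_simp
    exact_mod_cast this.symm

theorem constantCoeff_normalizedQInt (x : ℕ) : constantCoeff (normalizedQInt x) = 1 := by
  simp [normalizedQInt, ← coeff_zero_eq_constantCoeff_apply]

theorem hasPolyCoeffs_normalizedQInt {g : ℕ → ℕ → ℕ} (hg : IsPolyFn 1 fun a b => (g a b : ℚ)) :
    HasPolyCoeffs 1 fun a b => normalizedQInt (g a b) := by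
  intro i
  simp only [normalizedQInt, coeff_mk, Nat.cast_choose_eq_descPochhammer_div, div_div]
  refine (hg.polynomial_eval _).mul (IsPolyFn.const _) |>.mono ?_
  rw [descPochhammer_natDegree]
  omega

-- The Gaussian binomial `[a + n choose n]_q` at `q = 1 + X`, divided by `(a + n).choose n`.
noncomputable def normalizedGaussBinom (a n : ℕ) : PowerSeries ℚ :=
  ∏ k ∈ range n, normalizedQInt (a + k) * (normalizedQInt k)⁻¹

theorem hasPolyCoeffs_normalizedGaussBinom : HasPolyCoeffs 2 normalizedGaussBinom := by
  have hnum := hasPolyCoeffs_normalizedQInt (g := (· + ·))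
    (by simpa using IsPolyFn.fst.add IsPolyFn.snd)
  have hden := hasPolyCoeffs_normalizedQInt IsPolyFn.snd
  refine HasPolyCoeffs.prod_range (hnum.mul (hden.inv fun _ _ => ?_)) fun _ _ => ?_
  · exact constantCoeff_normalizedQInt _
  · simp [constantCoeff_normalizedQInt]

theorem constantCoeff_normalizedGaussBinom (a n : ℕ) :
    constantCoeff (normalizedGaussBinom a n) = 1 := by
  simp [normalizedGaussBinom, constantCoeff_normalizedQInt]

theorem prod_Icc_one_add_X_pow_sub_one (a n : ℕ) :
    ∏ l ∈ Icc (a + 1) (a + n), ((1 + X : PowerSeries ℚ) ^ l - 1) =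
      C (((a + n).choose n * n.factorial : ℕ) : ℚ) * X ^ n *
        ∏ k ∈ range n, normalizedQInt (a + k) := by
  rw [← Finset.Ico_add_one_right_eq_Icc, prod_Ico_eq_prod_range, add_right_comm,
    Nat.add_sub_cancel_left]
  have hasc : ∏ k ∈ range n, (((a + k : ℕ) : ℚ) + 1) = ((a + n).choose n * n.factorial : ℕ) := by
    rw [Nat.mul_comm, ← Nat.ascFactorial_eq_factorial_mul_choose, Nat.ascFactorial_eq_prod_range]
    push_cast
    exact prod_congr rfl fun k _ => by ring
  simp only [add_right_comm a 1, one_add_X_pow_succ_sub_one, prod_mul_distrib, prod_const,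
    card_range, ← map_prod, hasc, mul_assoc]

theorem prod_Icc_one_add_X_pow_sub_one_eq_mul (a n : ℕ) :
    ∏ l ∈ Icc (a + 1) (a + n), ((1 + X : PowerSeries ℚ) ^ l - 1) =
      (∏ l ∈ Icc 1 n, ((1 + X : PowerSeries ℚ) ^ l - 1)) *
        (C ((a + n).choose n : ℚ) * normalizedGaussBinom a n) := by
  have hfactor : ∏ k ∈ range n, normalizedQInt (a + k) =
      (∏ k ∈ range n, normalizedQInt k) * normalizedGaussBinom a n := by
    rw [normalizedGaussBinom, ← prod_mul_distrib]
    refine prod_congr rfl fun k _ => ?_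
    rw [mul_left_comm, PowerSeries.mul_inv_cancel _ (by simp [constantCoeff_normalizedQInt]),
      mul_one]
  have h0 := prod_Icc_one_add_X_pow_sub_one 0 n
  simp only [zero_add, Nat.choose_self, one_mul] at h0
  rw [prod_Icc_one_add_X_pow_sub_one, h0, hfactor]
  push_cast
  rw [map_mul]
  ring

end PowerSeries

/-- Lemma A.1: there are polynomials `T_j ∈ ℚ[X,Y]` (`j ≥ 1`) of total degree at most `2j`
such that, in `ℚ[[h]]`, for all `n ≤ m`,
`∏_{l=m-n+1}^{m} ((1+h)^l - 1) = (∏_{l=1}^{n} ((1+h)^l - 1)) · G_{m,n}`, where `G_{m,n}` is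
the power series with constant coefficient `binom(m,n)` and coefficient of `h^j` equal to
`binom(m,n) · T_j(m,n)` for `j ≥ 1`. -/
theorem stmt_7 :
    ∃ T : ℕ → MvPolynomial (Fin 2) ℚ,
      (∀ j : ℕ, 1 ≤ j → (T j).totalDegree ≤ 2 * j) ∧
      ∀ m n : ℕ, n ≤ m →
        (∏ l ∈ Finset.Icc (m - n + 1) m,
            ((1 + PowerSeries.X : PowerSeries ℚ) ^ l - 1)) =
          (∏ l ∈ Finset.Icc 1 n, ((1 + PowerSeries.X : PowerSeries ℚ) ^ l - 1)) *
            PowerSeries.mk (fun j =>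
              if j = 0 then (m.choose n : ℚ)
              else (m.choose n : ℚ) * MvPolynomial.eval ![(m : ℚ), (n : ℚ)] (T j)) := by
  choose T hTdeg hTeval using
    fun j => (PowerSeries.hasPolyCoeffs_normalizedGaussBinom j).exists_shear
  refine ⟨T, fun j _ => hTdeg j, fun m n hnm => ?_⟩
  obtain ⟨a, rfl⟩ := Nat.exists_eq_add_of_le' hnm
  rw [Nat.add_sub_cancel, PowerSeries.prod_Icc_one_add_X_pow_sub_one_eq_mul]
  congr 1
  ext j
  rw [PowerSeries.coeff_C_mul, PowerSeries.coeff_mk]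
  split_ifs with hj
  · simp [hj, PowerSeries.constantCoeff_normalizedGaussBinom]
  · rw [hTeval]
end

section
/- For natural numbers j and m_1 ≤ m_2 define Σ_j(m_1, m_2) := ∑_{A} ∏_{l ∈ A} ((1+h)^{−l} − 1) ∈ ℚ[[h]], where the sum ranges over all j-element subsets A of {m_1+1, …, m_2}. Then the coefficient of h^p in Σ_j(m_1, m_2) vanishes for p < j, and there exists a family of polynomials T_{j,k} ∈ ℚ[X, Y], for j, k ≥ 0, with total degree deg T_{j,k} ≤ j + k, such that for all j, k and all natural numbers m_1 ≤ m_2 the coefficient of h^{j+k} in Σ_j(m_1, m_2) equals (∏_{i=0}^{j−1} (m_2 − m_1 − i)) · T_{j,k}(m_1, m_2). -/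
open Finset MvPolynomial
open scoped PowerSeries

/-!
Removing the smallest element of `A` gives
`Σ_{j+1}(m₁, m₂) = ∑_{l = m₁+1}^{m₂} ((1+h)^{-l} - 1) Σ_j(l, m₂)`. Every factor
`(1+h)^{-l} - 1` is divisible by `h`, so `h^j ∣ Σ_j`, and the coefficient of `h^n` in
`(1+h)^{-l}` is `(-1)^n binom(l+n-1, n)`, a polynomial of degree `n` in `l`. Summing over `l`
with Faulhaber's formula, induction on `j` shows that for `m₁ ≤ m₂` the coefficient of
`h^{j+k}` in `Σ_j(m₁, m₂)` is a polynomial `P_{j,k}(m₁, m₂)` of degree at most `2j + k`.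
As `Σ_j(m, m+i) = 0` for `i < j`, `P_{j,k}` vanishes on the lines `m₂ = m₁ + i`, so it is
divisible by the pairwise coprime linear forms `m₂ - m₁ - i`, whose product has degree `j`.
-/

section IntervalEsymm

variable {R : Type*} [CommSemiring R] (f : ℕ → R)

def intervalEsymm (j m₁ m₂ : ℕ) : R :=
  ∑ A ∈ powersetCard j (Icc (m₁ + 1) m₂), ∏ l ∈ A, f l

theorem intervalEsymm_zero (m₁ m₂ : ℕ) : intervalEsymm f 0 m₁ m₂ = 1 := by
  simp [intervalEsymm]

theorem intervalEsymm_eq_zero_of_lt {j m₁ m₂ : ℕ} (h : m₂ - m₁ < j) :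
    intervalEsymm f j m₁ m₂ = 0 := by
  rw [intervalEsymm, powersetCard_eq_empty.2 (by simpa using h), sum_empty]

theorem intervalEsymm_succ_of_lt (j : ℕ) {m₁ m₂ : ℕ} (h : m₁ < m₂) :
    intervalEsymm f (j + 1) m₁ m₂ =
      f (m₁ + 1) * intervalEsymm f j (m₁ + 1) m₂ + intervalEsymm f (j + 1) (m₁ + 1) m₂ := by
  have hx : m₁ + 1 ∉ Icc (m₁ + 1 + 1) m₂ := by simp
  have hxA : ∀ n, ∀ A ∈ powersetCard n (Icc (m₁ + 1 + 1) m₂), m₁ + 1 ∉ A :=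
    fun n A hA hmem => hx ((mem_powersetCard.1 hA).1 hmem)
  simp only [intervalEsymm]
  rw [← insert_Icc_add_one_left_eq_Icc (by omega), powersetCard_succ_insert hx, sum_union,
    sum_image, add_comm, mul_sum]
  · exact congrArg₂ _ (sum_congr rfl fun A hA => prod_insert (hxA j A hA)) rfl
  · intro A hA B hB hAB
    rw [← erase_insert (hxA j A hA), ← erase_insert (hxA j B hB), hAB]
  · refine disjoint_left.2 fun A hA hA' => ?_
    obtain ⟨B, -, rfl⟩ := mem_image.1 hA'
    exact hxA _ _ hA (mem_insert_self _ _)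

theorem intervalEsymm_succ (j : ℕ) {m₁ m₂ : ℕ} (h : m₁ ≤ m₂) :
    intervalEsymm f (j + 1) m₁ m₂ = ∑ l ∈ Icc (m₁ + 1) m₂, f l * intervalEsymm f j l m₂ := by
  induction h using Nat.decreasingInduction with
  | self => simp [intervalEsymm_eq_zero_of_lt]
  | of_succ k hk ih =>
    rw [intervalEsymm_succ_of_lt f j hk, ih,
      ← insert_Icc_add_one_left_eq_Icc (by omega : k + 1 ≤ m₂), sum_insert (by simp)]

theorem pow_dvd_intervalEsymm {d : R} (hd : ∀ l, d ∣ f l) (j m₁ m₂ : ℕ) :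
    d ^ j ∣ intervalEsymm f j m₁ m₂ := by
  refine dvd_sum fun A hA => ?_
  rw [← (mem_powersetCard.1 hA).2, ← prod_const]
  exact prod_dvd_prod_of_dvd _ _ fun l _ => hd l

end IntervalEsymm

section PowerSeriesCoeff

theorem PowerSeries.coeff_add_succ_mul_of_dvd {R : Type*} [CommSemiring R] {f s : R⟦X⟧} {j : ℕ}
    (hf : PowerSeries.X ∣ f) (hs : PowerSeries.X ^ j ∣ s) (k : ℕ) :
    coeff (j + 1 + k) (f * s) =
      ∑ i ∈ range (k + 1), coeff (i + 1) f * coeff (j + (k - i)) s := by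
  obtain ⟨u, rfl⟩ := hf
  obtain ⟨v, rfl⟩ := hs
  rw [mul_mul_mul_comm, ← pow_succ', add_comm, coeff_X_pow_mul, coeff_mul,
    Nat.sum_antidiagonal_eq_sum_range_succ_mk]
  refine sum_congr rfl fun i _ => ?_
  rw [coeff_succ_X_mul, add_comm j, coeff_X_pow_mul]

variable {K : Type*} [Field K]

theorem PowerSeries.coeff_inv_one_add_X_pow (n l : ℕ) :
    coeff n ((1 + X : K⟦X⟧)⁻¹ ^ l) = (-1) ^ n * ((l + n - 1).choose n : K) := by
  have hrec : ∀ n l, coeff (n + 1) ((1 + X : K⟦X⟧)⁻¹ ^ (l + 1)) =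
      coeff (n + 1) ((1 + X : K⟦X⟧)⁻¹ ^ l) - coeff n ((1 + X : K⟦X⟧)⁻¹ ^ (l + 1)) := by
    intro n l
    have hunit : (1 + X : K⟦X⟧)⁻¹ ^ (l + 1) * (1 + X) = (1 + X)⁻¹ ^ l := by
      rw [pow_succ, mul_assoc, PowerSeries.inv_mul_cancel _ (by simp), mul_one]
    rw [← hunit, mul_add, mul_one, map_add, coeff_succ_mul_X]
    ring
  induction l generalizing n with
  | zero => cases n <;> simp [coeff_one]
  | succ l ih =>
    induction n with
    | zero => simp
    | succ n ihn =>
      rw [hrec, ih, ihn, show l + (n + 1) - 1 = l + n by omega,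
        show l + 1 + (n + 1) - 1 = l + n + 1 by omega, show l + 1 + n - 1 = l + n by omega,
        Nat.choose_succ_succ', Nat.cast_add]
      ring

end PowerSeriesCoeff

section SigmaSeries

variable (K : Type*) [Field K]

noncomputable def sigmaSeries (j m₁ m₂ : ℕ) : K⟦X⟧ :=
  intervalEsymm (fun l => (1 + PowerSeries.X : K⟦X⟧)⁻¹ ^ l - 1) j m₁ m₂

variable {K}

theorem X_dvd_inv_one_add_X_pow_sub_one (l : ℕ) :
    PowerSeries.X ∣ (1 + PowerSeries.X : K⟦X⟧)⁻¹ ^ l - 1 := by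
  simp [PowerSeries.X_dvd_iff, PowerSeries.constantCoeff_inv]

theorem X_pow_dvd_sigmaSeries (j m₁ m₂ : ℕ) : PowerSeries.X ^ j ∣ sigmaSeries K j m₁ m₂ :=
  pow_dvd_intervalEsymm _ X_dvd_inv_one_add_X_pow_sub_one j m₁ m₂

theorem coeff_sigmaSeries_of_lt {p j : ℕ} (hp : p < j) (m₁ m₂ : ℕ) :
    PowerSeries.coeff p (sigmaSeries K j m₁ m₂) = 0 :=
  PowerSeries.X_pow_dvd_iff.1 (X_pow_dvd_sigmaSeries j m₁ m₂) p hp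

theorem coeff_sigmaSeries_succ (j k : ℕ) {m₁ m₂ : ℕ} (h : m₁ ≤ m₂) :
    PowerSeries.coeff (j + 1 + k) (sigmaSeries K (j + 1) m₁ m₂) =
      ∑ l ∈ Icc (m₁ + 1) m₂, ∑ i ∈ range (k + 1),
        PowerSeries.coeff (i + 1) ((1 + PowerSeries.X : K⟦X⟧)⁻¹ ^ l) *
          PowerSeries.coeff (j + (k - i)) (sigmaSeries K j l m₂) := by
  rw [sigmaSeries, intervalEsymm_succ _ j h, map_sum]
  refine sum_congr rfl fun l _ => ?_
  refine (PowerSeries.coeff_add_succ_mul_of_dvd (X_dvd_inv_one_add_X_pow_sub_one l)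
    (X_pow_dvd_sigmaSeries j l m₂) k).trans (sum_congr rfl fun i _ => ?_)
  simp [PowerSeries.coeff_one]

end SigmaSeries
theorem MvPolynomial.totalDegree_prod_of_isDomain {σ R ι : Type*} [CommRing R] [IsDomain R]
    {s : Finset ι} {f : ι → MvPolynomial σ R} (hf : ∀ i ∈ s, f i ≠ 0) :
    (∏ i ∈ s, f i).totalDegree = ∑ i ∈ s, (f i).totalDegree := by
  classical
  induction s using Finset.induction_on with
  | empty => simp
  | insert a s ha ih =>
    rw [prod_insert ha, sum_insert ha, totalDegree_mul_of_isDomain (hf a (mem_insert_self a s))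
      (prod_ne_zero_iff.2 fun i hi => hf i (mem_insert_of_mem hi)),
      ih fun i hi => hf i (mem_insert_of_mem hi)]

section Lines

variable {K : Type*} [Field K]

theorem totalDegree_X_sub_X_sub_C (c : K) :
    (X 1 - X 0 - C c : MvPolynomial (Fin 2) K).totalDegree = 1 := by
  refine le_antisymm ((totalDegree_sub_C_le _ _).trans ((totalDegree_sub _ _).trans
    (max_le (totalDegree_X _).le (totalDegree_X _).le))) ?_
  have hcoeff : coeff (Finsupp.single 1 1) (X 1 - X 0 - C c : MvPolynomial (Fin 2) K) = 1 := by
    simp [coeff_X, coeff_C, Finsupp.single_eq_single_iff,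
      ((Finsupp.single_ne_zero (a := (1 : Fin 2))).2 one_ne_zero).symm]
  have := le_totalDegree (mem_support_iff.2 (hcoeff ▸ one_ne_zero))
  rwa [Finsupp.sum_single_index rfl] at this

theorem X_sub_X_sub_C_ne_zero (c : K) : (X 1 - X 0 - C c : MvPolynomial (Fin 2) K) ≠ 0 :=
  fun h => by simpa [h] using totalDegree_X_sub_X_sub_C c

theorem isCoprime_X_sub_X_sub_C {c c' : K} (h : c ≠ c') :
    IsCoprime (X 1 - X 0 - C c : MvPolynomial (Fin 2) K) (X 1 - X 0 - C c') := by
  refine ⟨C (c' - c)⁻¹, -C (c' - c)⁻¹, ?_⟩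
  rw [neg_mul, ← sub_eq_add_neg, ← mul_sub, sub_sub_sub_cancel_left, ← C_sub, ← C_mul,
    inv_mul_cancel₀ (sub_ne_zero.2 h.symm), C_1]

theorem X_sub_X_sub_C_dvd_of_eval_eq_zero [CharZero K] {c : K} {P : MvPolynomial (Fin 2) K}
    (h : ∀ m : ℕ, eval ![(m : K), m + c] P = 0) : X 1 - X 0 - C c ∣ P := by
  -- `P ≡ P(X₀, X₀ + c)` modulo the linear form, and `t ↦ P(t, t + c)` has infinitely many roots.
  set line : Fin 2 → Polynomial K := ![Polynomial.X, Polynomial.X + Polynomial.C c]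
  set diag : Fin 2 → MvPolynomial (Fin 2) K := ![X 0, X 0 + C c]
  set I := Ideal.span {(X 1 - X 0 - C c : MvPolynomial (Fin 2) K)}
  have hroots : ∀ m : ℕ, (aeval line P).eval (m : K) = 0 := fun m => by
    have hcomp := congrArg (· P) (comp_aeval (R := K) line (Polynomial.aeval (m : K)))
    have hpt : (fun i => (line i).eval (m : K)) = ![(m : K), m + c] := by
      funext i; fin_cases i <;> simp [line]
    simp only [AlgHom.comp_apply, Polynomial.coe_aeval_eq_eval] at hcomp
    rw [hcomp, hpt]
    exact h m
  have hzero : aeval line P = 0 := Polynomial.eq_zero_of_infinite_isRoot _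
    (Set.infinite_of_injective_forall_mem Nat.cast_injective hroots)
  have hsubst : (Polynomial.toMvPolynomial 0).comp (aeval line) = aeval diag :=
    algHom_ext fun i => by fin_cases i <;> simp [line, diag]
  have hquot : (Ideal.Quotient.mkₐ K I).comp (aeval diag) = Ideal.Quotient.mkₐ K I :=
    algHom_ext fun i => by
      fin_cases i
      · simp [diag]
      · simp only [AlgHom.comp_apply, aeval_X, diag, Ideal.Quotient.mkₐ_eq_mk, Ideal.Quotient.eq, I,
          Ideal.mem_span_singleton]
        exact ⟨-1, by simp only [Fin.mk_one, Matrix.cons_val_one, Matrix.cons_val_fin_one]; ring⟩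
  rw [← Ideal.mem_span_singleton, ← Ideal.Quotient.eq_zero_iff_mem, ← Ideal.Quotient.mkₐ_eq_mk K,
    ← hquot, AlgHom.comp_apply, ← DFunLike.congr_fun hsubst P, AlgHom.comp_apply, hzero, map_zero,
    map_zero]

theorem prod_X_sub_X_sub_C_dvd_of_eval_eq_zero [CharZero K] {j : ℕ} {P : MvPolynomial (Fin 2) K}
    (h : ∀ i < j, ∀ m : ℕ, eval ![(m : K), m + i] P = 0) :
    ∏ i ∈ range j, (X 1 - X 0 - C (i : K)) ∣ P :=
  prod_dvd_of_coprime
    (fun _ _ _ _ hii' => isCoprime_X_sub_X_sub_C (Nat.cast_injective.ne hii'))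
    fun i hi => X_sub_X_sub_C_dvd_of_eval_eq_zero (h i (mem_range.1 hi))

theorem totalDegree_prod_X_sub_X_sub_C (j : ℕ) :
    (∏ i ∈ range j, (X 1 - X 0 - C (i : K)) : MvPolynomial (Fin 2) K).totalDegree = j := by
  rw [totalDegree_prod_of_isDomain fun i _ => X_sub_X_sub_C_ne_zero _]
  simp only [totalDegree_X_sub_X_sub_C, sum_const, card_range, smul_eq_mul, mul_one]

end Lines

def IsPolyOfDegreeLE (d : ℕ) (f : ℕ → ℕ → ℚ) : Prop :=
  ∃ P : MvPolynomial (Fin 2) ℚ, P.totalDegree ≤ d ∧ ∀ x y, x ≤ y → f x y = eval ![(x : ℚ), y] P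

namespace IsPolyOfDegreeLE

variable {d e : ℕ} {f g : ℕ → ℕ → ℚ}

theorem mono (hf : IsPolyOfDegreeLE d f) (h : d ≤ e) : IsPolyOfDegreeLE e f :=
  let ⟨P, hP, hfP⟩ := hf
  ⟨P, hP.trans h, hfP⟩

theorem congr (hf : IsPolyOfDegreeLE d f) (h : ∀ x y, x ≤ y → f x y = g x y) :
    IsPolyOfDegreeLE d g :=
  let ⟨P, hP, hfP⟩ := hf
  ⟨P, hP, fun x y hxy => (h x y hxy).symm.trans (hfP x y hxy)⟩

theorem const (c : ℚ) : IsPolyOfDegreeLE 0 fun _ _ => c :=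
  ⟨C c, by simp, fun _ _ _ => by simp⟩

theorem snd_pow (b : ℕ) : IsPolyOfDegreeLE b fun _ y => (y : ℚ) ^ b :=
  ⟨X 1 ^ b, (totalDegree_pow _ _).trans (by simp), fun _ _ _ => by simp⟩

theorem mul (hf : IsPolyOfDegreeLE d f) (hg : IsPolyOfDegreeLE e g) :
    IsPolyOfDegreeLE (d + e) fun x y => f x y * g x y :=
  let ⟨P, hP, hfP⟩ := hf
  let ⟨Q, hQ, hgQ⟩ := hg
  ⟨P * Q, (totalDegree_mul P Q).trans (add_le_add hP hQ),
    fun x y hxy => by simp only [hfP x y hxy, hgQ x y hxy, eval_mul]⟩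

theorem sum {ι : Type*} {s : Finset ι} {f : ι → ℕ → ℕ → ℚ}
    (hf : ∀ i ∈ s, IsPolyOfDegreeLE d (f i)) :
    IsPolyOfDegreeLE d fun x y => ∑ i ∈ s, f i x y := by
  choose! P hP hfP using hf
  exact ⟨∑ i ∈ s, P i, totalDegree_finsetSum_le hP,
    fun x y hxy => by rw [map_sum]; exact sum_congr rfl fun i hi => hfP i hi x y hxy⟩

end IsPolyOfDegreeLE

noncomputable def powerSumPoly (a : ℕ) (i : Fin 2) : MvPolynomial (Fin 2) ℚ :=
  ∑ t ∈ range (a + 1), C (bernoulli t * (a + 1).choose t / (a + 1)) * X i ^ (a + 1 - t)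

theorem totalDegree_powerSumPoly_le (a : ℕ) (i : Fin 2) :
    (powerSumPoly a i).totalDegree ≤ a + 1 := by
  refine totalDegree_finsetSum_le fun t _ => (totalDegree_mul _ _).trans ?_
  rw [totalDegree_C, zero_add]
  exact (totalDegree_pow _ _).trans (by simp)

theorem eval_powerSumPoly (a : ℕ) {i : Fin 2} {v : Fin 2 → ℚ} {n : ℕ} (hv : v i = n) :
    eval v (powerSumPoly a i) = ∑ k ∈ range n, (k : ℚ) ^ a := by
  rw [sum_range_pow, powerSumPoly, map_sum]
  refine sum_congr rfl fun t _ => ?_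
  rw [eval_mul, eval_C, eval_pow, eval_X, hv]
  ring

theorem isPolyOfDegreeLE_sum_Icc_pow (a : ℕ) :
    IsPolyOfDegreeLE (a + 1) fun x y => ∑ l ∈ Icc (x + 1) y, (l : ℚ) ^ a := by
  refine ⟨powerSumPoly a 1 + X 1 ^ a - (powerSumPoly a 0 + X 0 ^ a), ?_, fun x y hxy => ?_⟩
  · have hX : ∀ i : Fin 2, (X i ^ a : MvPolynomial (Fin 2) ℚ).totalDegree ≤ a + 1 :=
      fun i => (totalDegree_pow _ _).trans (by simp)
    refine (totalDegree_sub _ _).trans (max_le ?_ ?_) <;>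
      exact (totalDegree_add _ _).trans (max_le (totalDegree_powerSumPoly_le a _) (hX _))
  · dsimp only
    rw [← Ico_add_one_right_eq_Icc, sum_Ico_eq_sub _ (by omega), sum_range_succ, sum_range_succ]
    simp [eval_powerSumPoly]

theorem IsPolyOfDegreeLE.sum_Icc {d : ℕ} {f : ℕ → ℕ → ℚ} (hf : IsPolyOfDegreeLE d f) :
    IsPolyOfDegreeLE (d + 1) fun x y => ∑ l ∈ Icc (x + 1) y, f l y := by
  obtain ⟨P, hP, hfP⟩ := hf
  have hmono : ∀ s ∈ P.support, IsPolyOfDegreeLE (d + 1) fun x y =>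
      coeff s P * (y : ℚ) ^ s 1 * ∑ l ∈ Icc (x + 1) y, (l : ℚ) ^ s 0 := by
    intro s hs
    have hdeg : s 0 + s 1 ≤ d := by
      have := le_totalDegree hs
      rw [Finsupp.sum_fintype _ _ fun _ => rfl, Fin.sum_univ_two] at this
      omega
    exact (((IsPolyOfDegreeLE.const _).mul (.snd_pow _)).mul (isPolyOfDegreeLE_sum_Icc_pow _)).mono
      (by omega)
  refine (IsPolyOfDegreeLE.sum hmono).congr fun x y _ => ?_
  simp_rw [mul_sum]
  rw [sum_comm]
  refine sum_congr rfl fun l hl => ?_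
  rw [hfP l y (mem_Icc.1 hl).2, eval_eq']
  refine sum_congr rfl fun s _ => ?_
  simp only [Fin.prod_univ_two, Matrix.cons_val_zero, Matrix.cons_val_one, Matrix.cons_val_fin_one]
  ring

theorem isPolyOfDegreeLE_coeff_inv_one_add_X_pow (n : ℕ) :
    IsPolyOfDegreeLE n fun l _ => PowerSeries.coeff n ((1 + PowerSeries.X : ℚ⟦X⟧)⁻¹ ^ l) := by
  refine ⟨C ((-1) ^ n / n.factorial : ℚ) * ∏ i ∈ range n, (X 0 + C (i : ℚ)), ?_, fun l _ _ => ?_⟩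
  · refine (totalDegree_mul _ _).trans ?_
    rw [totalDegree_C, zero_add]
    refine (totalDegree_finsetProd _ _).trans ?_
    calc ∑ i ∈ range n, (X 0 + C (i : ℚ) : MvPolynomial (Fin 2) ℚ).totalDegree
        ≤ ∑ _i ∈ range n, 1 :=
          sum_le_sum fun i _ => (totalDegree_add _ _).trans
            (max_le (totalDegree_X _).le (by rw [totalDegree_C]; omega))
      _ = n := by simp
  · have hfac : (n.factorial : ℚ) ≠ 0 := by positivity
    have hasc : ((l.ascFactorial n : ℕ) : ℚ) = ∏ i ∈ range n, ((l : ℚ) + i) := by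
      rw [Nat.ascFactorial_eq_prod_range]; push_cast; rfl
    dsimp only
    rw [PowerSeries.coeff_inv_one_add_X_pow, eval_mul, eval_C, eval_prod]
    simp only [eval_add, eval_X, eval_C, Matrix.cons_val_zero]
    rw [← hasc, Nat.ascFactorial_eq_factorial_mul_choose', Nat.cast_mul]
    field_simp

theorem isPolyOfDegreeLE_coeff_sigmaSeries (j k : ℕ) :
    IsPolyOfDegreeLE (2 * j + k) fun x y => PowerSeries.coeff (j + k) (sigmaSeries ℚ j x y) := by
  induction j generalizing k with
  | zero =>
    refine (IsPolyOfDegreeLE.const (if k = 0 then 1 else 0)).mono (by omega) |>.congr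
      fun x y _ => ?_
    simp [sigmaSeries, intervalEsymm_zero, PowerSeries.coeff_one]
  | succ j ih =>
    have hterm : ∀ i ∈ range (k + 1), IsPolyOfDegreeLE (2 * j + k + 1) fun l y =>
        PowerSeries.coeff (i + 1) ((1 + PowerSeries.X : ℚ⟦X⟧)⁻¹ ^ l) *
          PowerSeries.coeff (j + (k - i)) (sigmaSeries ℚ j l y) := fun i hi =>
      ((isPolyOfDegreeLE_coeff_inv_one_add_X_pow _).mul (ih _)).mono
        (by simp only [mem_range] at hi; omega)
    exact (IsPolyOfDegreeLE.sum hterm).sum_Icc.mono (by omega) |>.congr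
      fun x y hxy => (coeff_sigmaSeries_succ j k hxy).symm


theorem exists_totalDegree_le_coeff_sigmaSeries_eq (j k : ℕ) :
    ∃ T : MvPolynomial (Fin 2) ℚ, T.totalDegree ≤ j + k ∧ ∀ m₁ m₂ : ℕ, m₁ ≤ m₂ →
      PowerSeries.coeff (j + k) (sigmaSeries ℚ j m₁ m₂) =
        (∏ i ∈ range j, ((m₂ : ℚ) - m₁ - i)) * eval ![(m₁ : ℚ), m₂] T := by
  obtain ⟨P, hP, hsigma⟩ := isPolyOfDegreeLE_coeff_sigmaSeries j k
  have hlines : ∀ i < j, ∀ m : ℕ, eval ![(m : ℚ), m + i] P = 0 := fun i hi m => by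
    have := hsigma m (m + i) (by omega)
    dsimp only at this
    rw [sigmaSeries, intervalEsymm_eq_zero_of_lt _ (by omega), map_zero] at this
    exact_mod_cast this.symm
  obtain ⟨T, rfl⟩ := prod_X_sub_X_sub_C_dvd_of_eval_eq_zero hlines
  refine ⟨T, ?_, fun m₁ m₂ hm => by simp [hsigma m₁ m₂ hm]⟩
  rcases eq_or_ne T 0 with rfl | hT
  · simp
  · rw [totalDegree_mul_of_isDomain (prod_ne_zero_iff.2 fun i _ => X_sub_X_sub_C_ne_zero _) hT,
      totalDegree_prod_X_sub_X_sub_C] at hP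
    omega

/-- Lemma A.3: for `Σ_j(m₁,m₂) = ∑_{A ⊆ {m₁+1,…,m₂}, |A| = j} ∏_{l ∈ A} ((1+h)^{-l} - 1)`
in `ℚ[[h]]`, the coefficient of `h^p` vanishes for `p < j`, and there are polynomials
`T_{j,k} ∈ ℚ[X,Y]` of total degree at most `j + k` with coefficient of `h^{j+k}` in
`Σ_j(m₁,m₂)` equal to `(∏_{i=0}^{j-1} (m₂ - m₁ - i)) · T_{j,k}(m₁,m₂)`. -/
theorem stmt_9 :
    let S : ℕ → ℕ → ℕ → PowerSeries ℚ := fun j m₁ m₂ =>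
      ∑ A ∈ Finset.powersetCard j (Finset.Icc (m₁ + 1) m₂),
        ∏ l ∈ A, (((1 + PowerSeries.X : PowerSeries ℚ)⁻¹) ^ l - 1)
    (∀ j m₁ m₂ : ℕ, m₁ ≤ m₂ → ∀ p : ℕ, p < j → PowerSeries.coeff (R := ℚ) p (S j m₁ m₂) = 0) ∧
      ∃ T : ℕ → ℕ → MvPolynomial (Fin 2) ℚ,
        (∀ j k : ℕ, (T j k).totalDegree ≤ j + k) ∧
        ∀ j k m₁ m₂ : ℕ, m₁ ≤ m₂ →
          PowerSeries.coeff (R := ℚ) (j + k) (S j m₁ m₂) =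
            (∏ i ∈ Finset.range j, ((m₂ : ℚ) - (m₁ : ℚ) - (i : ℚ))) *
              MvPolynomial.eval ![(m₁ : ℚ), (m₂ : ℚ)] (T j k) := by
  intro S
  refine ⟨fun j m₁ m₂ _ p hp => coeff_sigmaSeries_of_lt hp m₁ m₂, ?_⟩
  choose T hTdeg hT using exists_totalDegree_le_coeff_sigmaSeries_eq
  exact ⟨T, hTdeg, hT⟩
end
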